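/- Let n, m ≥ 1 be integers, and let μ be a finite measure on Π = [0,∞)² with density r^n s^m dr ds restricted to a bounded measurable set Ω ⊆ [0,M]×[0,∞). Define α = (∫∫_Ω r^n s^{2m+1} dr ds)^{1/(m+1)} · ((1/2)∫∫_{Ω₀} r^n s^m dr ds)^{-1/(m+1)}, and suppose ∫∫_Ω r^n s^m dr ds = ∫∫_{Ω₀} r^n s^m dr ds and ∫∫_Ω r^n s^{2m+1} dr ds ≤ ∫∫_{Ω₀} r^n s^{2m+1} dr ds for a fixed bounded set Ω₀ with positive measure. Then ∫∫_{Ω ∩ ([0,M]×[0,α])} r^n s^m dr ds ≥ (1/2) ∫∫_{Ω₀} r^n s^m dr ds. -/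
import Mathlib


open MeasureTheory

theorem stmt_6 (n m : ℕ) (hn : 1 ≤ n) (hm : 1 ≤ m) (M : ℝ) (hM : 0 < M)
    (Ω Ω₀ : Set (ℝ × ℝ)) (hΩmeas : MeasurableSet Ω) (hΩ₀meas : MeasurableSet Ω₀)
    (hΩsub : Ω ⊆ Set.Icc 0 M ×ˢ Set.Ici 0)
    (hΩ₀sub : Ω₀ ⊆ Set.Ici 0 ×ˢ Set.Ici 0)
    (hΩ₀bdd : Bornology.IsBounded Ω₀)
    (hint1 : IntegrableOn (fun p : ℝ × ℝ => p.1 ^ n * p.2 ^ m) Ω)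
    (hint2 : IntegrableOn (fun p : ℝ × ℝ => p.1 ^ n * p.2 ^ (2 * m + 1)) Ω)
    (hpos : 0 < ∫ p in Ω₀, p.1 ^ n * p.2 ^ m)
    (hcons : ∫ p in Ω, p.1 ^ n * p.2 ^ m = ∫ p in Ω₀, p.1 ^ n * p.2 ^ m)
    (himp : ∫ p in Ω, p.1 ^ n * p.2 ^ (2 * m + 1)
            ≤ ∫ p in Ω₀, p.1 ^ n * p.2 ^ (2 * m + 1))
    (α : ℝ)
    (hα : α = (∫ p in Ω₀, p.1 ^ n * p.2 ^ (2 * m + 1)) ^ ((1 : ℝ) / (m + 1))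
            * ((1 / 2) * ∫ p in Ω₀, p.1 ^ n * p.2 ^ m) ^ (-(1 : ℝ) / (m + 1))) :
    ∫ p in Ω ∩ (Set.Icc 0 M ×ˢ Set.Icc 0 α), p.1 ^ n * p.2 ^ m
      ≥ (1 / 2) * ∫ p in Ω₀, p.1 ^ n * p.2 ^ m := by
  set A := ∫ p in Ω₀, p.1 ^ n * p.2 ^ m with hAdef
  set I := ∫ p in Ω₀, p.1 ^ n * p.2 ^ (2 * m + 1) with hIdef
  have hnonneg1 : ∀ p ∈ Ω, (0:ℝ) ≤ p.1 ^ n * p.2 ^ m := by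
    intro p hp
    obtain ⟨h1, h2⟩ := hΩsub hp
    exact mul_nonneg (pow_nonneg h1.1 _) (pow_nonneg h2 _)
  have hnonneg2 : ∀ p ∈ Ω, (0:ℝ) ≤ p.1 ^ n * p.2 ^ (2 * m + 1) := by
    intro p hp
    obtain ⟨h1, h2⟩ := hΩsub hp
    exact mul_nonneg (pow_nonneg h1.1 _) (pow_nonneg h2 _)
  have hΩ2nonneg : 0 ≤ ∫ p in Ω, p.1 ^ n * p.2 ^ (2 * m + 1) :=
    setIntegral_nonneg hΩmeas hnonneg2
  -- I > 0
  have hIpos : 0 < I := by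
    rcases lt_or_eq_of_le (hΩ2nonneg.trans himp) with h | h
    · exact h
    · exfalso
      have hz : ∫ p in Ω, p.1 ^ n * p.2 ^ (2 * m + 1) = 0 :=
        le_antisymm (h ▸ himp) hΩ2nonneg
      have hae0 : (fun p : ℝ × ℝ => p.1 ^ n * p.2 ^ (2 * m + 1))
          =ᵐ[volume.restrict Ω] 0 := by
        refine (integral_eq_zero_iff_of_nonneg_ae ?_ hint2).1 hz
        exact (ae_restrict_iff' hΩmeas).2 (Filter.Eventually.of_forall hnonneg2)
      have hae1 : (fun p : ℝ × ℝ => p.1 ^ n * p.2 ^ m) =ᵐ[volume.restrict Ω] 0 := by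
        filter_upwards [hae0] with p hp
        simp only [Pi.zero_apply] at hp ⊢
        rcases mul_eq_zero.1 hp with h' | h'
        · rw [pow_eq_zero_iff (by omega)] at h'
          rw [h', zero_pow (by omega), zero_mul]
        · rw [pow_eq_zero_iff (by omega)] at h'
          rw [h', zero_pow (by omega), mul_zero]
      have : (∫ p in Ω, p.1 ^ n * p.2 ^ m) = 0 := by
        rw [integral_congr_ae hae1]; simp
      rw [hcons] at this
      exact hpos.ne' this
  have hA2pos : (0:ℝ) < (1 / 2) * A := by linarith
  have hαpos : 0 < α := by
    rw [hα]
    exact mul_pos (Real.rpow_pos_of_pos hIpos _) (Real.rpow_pos_of_pos hA2pos _)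
  have hexp : ((1:ℝ) / (m + 1)) * (m + 1 : ℕ) = 1 := by
    push_cast
    field_simp
  have hαpow : α ^ (m + 1) = I / ((1 / 2) * A) := by
    rw [hα, mul_pow, ← Real.rpow_natCast (I ^ _) (m + 1),
      ← Real.rpow_natCast ((_ * A) ^ _) (m + 1),
      ← Real.rpow_mul hIpos.le, ← Real.rpow_mul hA2pos.le, neg_div, neg_mul, hexp,
      Real.rpow_one, Real.rpow_neg_one]
    ring
  have hαpowpos : (0:ℝ) < α ^ (m + 1) := pow_pos hαpos _
  set T := Set.Icc (0:ℝ) M ×ˢ Set.Icc (0:ℝ) α with hT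
  have hTmeas : MeasurableSet T := measurableSet_Icc.prod measurableSet_Icc
  -- bound on the high part H = Ω \ T
  have hHbound : ∫ p in Ω \ T, p.1 ^ n * p.2 ^ m ≤ (1 / 2) * A := by
    have hptwise : ∀ p ∈ Ω \ T,
        p.1 ^ n * p.2 ^ m ≤ (p.1 ^ n * p.2 ^ (2 * m + 1)) / α ^ (m + 1) := by
      intro p hp
      obtain ⟨hpΩ, hpT⟩ := hp
      obtain ⟨h1, h2⟩ := hΩsub hpΩ
      have hs : α < p.2 := by
        by_contra hle
        push_neg at hle
        exact hpT ⟨h1, h2, hle⟩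
      rw [le_div_iff₀ hαpowpos]
      have h1' : (0:ℝ) ≤ p.1 ^ n := pow_nonneg h1.1 _
      have : p.2 ^ m * α ^ (m + 1) ≤ p.2 ^ (2 * m + 1) := by
        have : α ^ (m + 1) ≤ p.2 ^ (m + 1) :=
          pow_le_pow_left₀ hαpos.le hs.le _
        calc p.2 ^ m * α ^ (m + 1) ≤ p.2 ^ m * p.2 ^ (m + 1) :=
              mul_le_mul_of_nonneg_left this (pow_nonneg h2 _)
          _ = p.2 ^ (2 * m + 1) := by rw [← pow_add]; ring_nf
      calc p.1 ^ n * p.2 ^ m * α ^ (m + 1) = p.1 ^ n * (p.2 ^ m * α ^ (m + 1)) := by ring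
        _ ≤ p.1 ^ n * p.2 ^ (2 * m + 1) := mul_le_mul_of_nonneg_left this h1'
    have hi1 : IntegrableOn (fun p : ℝ × ℝ => p.1 ^ n * p.2 ^ m) (Ω \ T) :=
      hint1.mono_set Set.diff_subset
    have hi2 : IntegrableOn (fun p : ℝ × ℝ => p.1 ^ n * p.2 ^ (2 * m + 1)) (Ω \ T) :=
      hint2.mono_set Set.diff_subset
    have step1 : ∫ p in Ω \ T, p.1 ^ n * p.2 ^ m
        ≤ ∫ p in Ω \ T, (p.1 ^ n * p.2 ^ (2 * m + 1)) / α ^ (m + 1) :=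
      setIntegral_mono_on hi1 (hi2.div_const _) (hΩmeas.diff hTmeas) hptwise
    have step2 : ∫ p in Ω \ T, (p.1 ^ n * p.2 ^ (2 * m + 1)) / α ^ (m + 1)
        = (∫ p in Ω \ T, p.1 ^ n * p.2 ^ (2 * m + 1)) / α ^ (m + 1) :=
      integral_div _ _
    have step3 : ∫ p in Ω \ T, p.1 ^ n * p.2 ^ (2 * m + 1)
        ≤ ∫ p in Ω, p.1 ^ n * p.2 ^ (2 * m + 1) := by
      refine setIntegral_mono_set hint2 ?_ (HasSubset.Subset.eventuallyLE Set.diff_subset)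
      exact (ae_restrict_iff' hΩmeas).2 (Filter.Eventually.of_forall hnonneg2)
    calc ∫ p in Ω \ T, p.1 ^ n * p.2 ^ m
        ≤ (∫ p in Ω \ T, p.1 ^ n * p.2 ^ (2 * m + 1)) / α ^ (m + 1) := by
          rw [← step2]; exact step1
      _ ≤ I / α ^ (m + 1) := by
          gcongr
          exact step3.trans himp
      _ = (1 / 2) * A := by
          rw [hαpow, div_div_eq_mul_div, mul_comm, mul_div_assoc,
            div_self hIpos.ne', mul_one]
  have hsplit : (∫ p in Ω ∩ T, p.1 ^ n * p.2 ^ m)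
      + ∫ p in Ω \ T, p.1 ^ n * p.2 ^ m = ∫ p in Ω, p.1 ^ n * p.2 ^ m :=
    integral_inter_add_diff hTmeas hint1
  have := hsplit
  rw [hcons] at this
  linarith
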